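/- arXiv:1901.04358 — 3 statements merged into one kernel-verified Lean document; each statement's English description precedes it below -/
import Mathlib

section
/- For all real N, S, k with N ≥ 1, S > 0, k > 0, S ≥ k, and NS > 1, the identity (1/(NS)) · (1 - [(1 - 1/(NS))(1 - (S-k)/(k(NS-1)))]^m) / (1 - (1 - 1/(NS))(1 - (S-k)/(k(NS-1)))) = (k/S) · (1 - (1 - 1/(Nk))^m) holds for every natural number m. -/
/-- Closed-form simplification of the geometric sum giving the false positive
probability `FP_m` of a QHT with `N` rows, `k` buckets per row and `S` fingerprints. -/
theorem qht_fp_closed_form (N S k : ℝ) (hN : 1 ≤ N) (hS : 0 < S) (hk : 0 < k)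
    (hkS : k ≤ S) (hNS : 1 < N * S) (m : ℕ) :
    (1 / (N * S)) *
        (1 - ((1 - 1 / (N * S)) * (1 - (S - k) / (k * (N * S - 1)))) ^ m) /
        (1 - (1 - 1 / (N * S)) * (1 - (S - k) / (k * (N * S - 1)))) =
      (k / S) * (1 - (1 - 1 / (N * k)) ^ m) := by
  have hN0 : N ≠ 0 := by linarith
  have hS0 : S ≠ 0 := ne_of_gt hS
  have hk0 : k ≠ 0 := ne_of_gt hk
  have hNS0 : N * S ≠ 0 := mul_ne_zero hN0 hS0
  have hNS1 : N * S - 1 ≠ 0 := by linarith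
  have key : (1 - 1 / (N * S)) * (1 - (S - k) / (k * (N * S - 1))) = 1 - 1 / (N * k) := by
    field_simp
    ring
  rw [key]
  have : (1 : ℝ) - (1 - 1 / (N * k)) = 1 / (N * k) := by ring
  rw [this]
  field_simp
end

section
/- Let a, c ∈ (0,1) with 1 - a ≠ c, and let b ∈ (0,1). For integers i < m, Σ_{j=i+1}^{m} (1-a)^{j-i-1} · a · (1 - b(1 - c^{m-j})) = (1-b)(1 - (1-a)^{m-i}) + a·b·((1-a)^{m-i} - c^{m-i})/(1 - a - c). -/
/-! Substituting `t = j - i - 1` and `n = m - i` turns the sum into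
`(1 - b) · a ∑_{t<n} (1-a)^t + a b ∑_{t<n} (1-a)^t c^(n-1-t)`: a geometric sum, which telescopes
to `1 - (1-a)^n`, and a two-variable geometric sum, equal to `((1-a)^n - c^n) / (1 - a - c)`. -/

open Finset

theorem Finset.sum_Icc_succ_eq_sum_range_rev {M : Type*} [AddCommMonoid M] (f : ℕ → ℕ → M)
    (i m : ℕ) :
    ∑ j ∈ Icc (i + 1) m, f (j - i - 1) (m - j) = ∑ t ∈ range (m - i), f t (m - i - 1 - t) := by
  rw [← Ico_add_one_right_eq_Icc, sum_Ico_eq_sum_range, Nat.add_sub_add_right]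
  refine sum_congr rfl fun t _ => ?_
  congr 1 <;> omega

theorem mul_geom_sum_one_sub {R : Type*} [Ring R] (a : R) (n : ℕ) :
    a * ∑ t ∈ range n, (1 - a) ^ t = 1 - (1 - a) ^ n := by
  simpa only [sub_sub_cancel] using mul_neg_geom_sum (1 - a) n

theorem qht_fn_closed_form_general (a b c : ℝ)
    (hac : 1 - a ≠ c) (i m : ℕ) :
    ∑ j ∈ Finset.Icc (i + 1) m,
        (1 - a) ^ (j - i - 1) * a * (1 - b * (1 - c ^ (m - j))) =
      (1 - b) * (1 - (1 - a) ^ (m - i)) +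
        a * b * ((1 - a) ^ (m - i) - c ^ (m - i)) / (1 - a - c) := by
  rw [sum_Icc_succ_eq_sum_range_rev (fun t s => (1 - a) ^ t * a * (1 - b * (1 - c ^ s)))]
  have split : ∀ t s : ℕ, (1 - a) ^ t * a * (1 - b * (1 - c ^ s)) =
      (1 - b) * (a * (1 - a) ^ t) + a * b * ((1 - a) ^ t * c ^ s) := fun t s => by ring
  simp only [split, sum_add_distrib, ← mul_sum, mul_geom_sum_one_sub, geom₂_sum hac, mul_div_assoc]

/-- Closed form of the false negative probability `FN_{i,m}` of a QHT:
`a` is the per-step eviction probability, `b = k/S`, `c = 1 - 1/(Nk)`. -/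
theorem qht_fn_closed_form (a b c : ℝ) (ha : a ∈ Set.Ioo (0 : ℝ) 1)
    (hb : b ∈ Set.Ioo (0 : ℝ) 1) (hc : c ∈ Set.Ioo (0 : ℝ) 1)
    (hac : 1 - a ≠ c) (i m : ℕ) (him : i < m) :
    ∑ j ∈ Finset.Icc (i + 1) m,
        (1 - a) ^ (j - i - 1) * a * (1 - b * (1 - c ^ (m - j))) =
      (1 - b) * (1 - (1 - a) ^ (m - i)) +
        a * b * ((1 - a) ^ (m - i) - c ^ (m - i)) / (1 - a - c) :=
  qht_fn_closed_form_general a b c hac i m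
end

section
/- Let a, b, c, U be reals with 0 < a < 1, 0 < b < 1, 0 < c < 1, 1 - a ≠ c, and U ≥ 1. Define FN_{i,m} = (1-b)(1 - (1-a)^{m-i}) + ab((1-a)^{m-i} - c^{m-i})/(1-a-c), and FN_m = Σ_{i=1}^{m} ((U-1)/U)^{m-i} (1/U) · FN_{i,m}. Then the Cesàro means (1/n)Σ_{m=1}^{n} FN_m converge as n → ∞ to L = 1 - b - (1-b)/(U - (U-1)(1-a)) + ab/((1-a-c)(U - (U-1)(1-a))) - ab/((1-a-c)(U - (U-1)c)). -/
open Filter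

/-- The Cesàro means of the false negative probabilities `FN_m` of a QHT
converge to the asymptotic false negative rate `FNR_∞`. -/
theorem qht_fnr_tendsto (a b c U : ℝ) (ha : a ∈ Set.Ioo (0 : ℝ) 1)
    (hb : b ∈ Set.Ioo (0 : ℝ) 1) (hc : c ∈ Set.Ioo (0 : ℝ) 1)
    (hac : 1 - a ≠ c) (hU : 1 ≤ U) :
    Tendsto
      (fun n : ℕ => (1 / (n : ℝ)) * ∑ m ∈ Finset.Icc 1 n,
        ∑ i ∈ Finset.Icc 1 m,
          ((U - 1) / U) ^ (m - i) * (1 / U) *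
            ((1 - b) * (1 - (1 - a) ^ (m - i)) +
              a * b * ((1 - a) ^ (m - i) - c ^ (m - i)) / (1 - a - c)))
      atTop
      (nhds (1 - b - (1 - b) / (U - (U - 1) * (1 - a)) +
        a * b / ((1 - a - c) * (U - (U - 1) * (1 - a))) -
        a * b / ((1 - a - c) * (U - (U - 1) * c)))) := by
  obtain ⟨ha0, ha1⟩ := ha
  obtain ⟨hb0, hb1⟩ := hb
  obtain ⟨hc0, hc1⟩ := hc
  have hU0 : (0:ℝ) < U := lt_of_lt_of_le one_pos hU
  have hUne : U ≠ 0 := ne_of_gt hU0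
  have hacne : 1 - a - c ≠ 0 := by
    intro h; apply hac; linarith
  set r : ℝ := (U - 1) / U with hr
  set p : ℝ := 1 - a with hp
  have hr0 : 0 ≤ r := div_nonneg (by linarith) (le_of_lt hU0)
  have hr1 : r < 1 := by
    rw [hr, div_lt_one hU0]; linarith
  have hp0 : 0 ≤ p := by simp [hp]; linarith
  have hp1 : p < 1 := by simp [hp]; linarith
  have hrp0 : 0 ≤ r * p := mul_nonneg hr0 hp0
  have hrp1 : r * p < 1 :=
    lt_of_le_of_lt (mul_le_of_le_one_right hr0 (le_of_lt hp1)) hr1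
  have hrc0 : 0 ≤ r * c := mul_nonneg hr0 (le_of_lt hc0)
  have hrc1 : r * c < 1 :=
    lt_of_le_of_lt (mul_le_of_le_one_right hr0 (le_of_lt hc1)) hr1
  -- the summand sequence
  set s : ℕ → ℝ := fun j => r ^ j * (1 / U) *
      ((1 - b) * (1 - p ^ j) + a * b * (p ^ j - c ^ j) / (1 - a - c)) with hs
  -- nonvanishing denominators
  have h1r : 1 - r ≠ 0 := ne_of_gt (sub_pos.mpr hr1)
  have h1rp : 1 - r * p ≠ 0 := ne_of_gt (sub_pos.mpr hrp1)
  have h1rc : 1 - r * c ≠ 0 := ne_of_gt (sub_pos.mpr hrc1)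
  -- limit of partial sums of s
  set C1 : ℝ := (1 - b) / U with hC1
  set C2 : ℝ := (a * b / (1 - a - c) - (1 - b)) / U with hC2
  set C3 : ℝ := -(a * b / (1 - a - c)) / U with hC3
  have hgeo1 := (hasSum_geometric_of_lt_one hr0 hr1).tendsto_sum_nat
  have hgeo2 := (hasSum_geometric_of_lt_one hrp0 hrp1).tendsto_sum_nat
  have hgeo3 := (hasSum_geometric_of_lt_one hrc0 hrc1).tendsto_sum_nat
  have hcomb : Tendsto (fun m : ℕ => ∑ j ∈ Finset.range m, s j) atTop
      (nhds (C1 * (1 - r)⁻¹ + C2 * (1 - r * p)⁻¹ + C3 * (1 - r * c)⁻¹)) := by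
    have := ((hgeo1.const_mul C1).add (hgeo2.const_mul C2)).add
      (hgeo3.const_mul C3)
    refine this.congr (fun m => ?_)
    rw [Finset.mul_sum, Finset.mul_sum, Finset.mul_sum,
      ← Finset.sum_add_distrib, ← Finset.sum_add_distrib]
    refine Finset.sum_congr rfl (fun j _ => ?_)
    simp only [hs, hC1, hC2, hC3, mul_pow]
    field_simp
    ring
  -- identify the limit with the stated value
  have hLeq : C1 * (1 - r)⁻¹ + C2 * (1 - r * p)⁻¹ + C3 * (1 - r * c)⁻¹ =
      1 - b - (1 - b) / (U - (U - 1) * (1 - a)) +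
        a * b / ((1 - a - c) * (U - (U - 1) * (1 - a))) -
        a * b / ((1 - a - c) * (U - (U - 1) * c)) := by
    have hd1 : U - (U - 1) * (1 - a) ≠ 0 := by
      intro h
      apply h1rp
      rw [hr, hp]
      field_simp
      linarith [h]
    have hd2 : U - (U - 1) * c ≠ 0 := by
      intro h
      apply h1rc
      rw [hr]
      field_simp
      linarith [h]
    have e1 : 1 - r = 1 / U := by rw [hr]; field_simp; ring
    have e2 : 1 - r * p = (U - (U - 1) * (1 - a)) / U := by
      rw [hr, hp]; field_simp
    have e3 : 1 - r * c = (U - (U - 1) * c) / U := by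
      rw [hr]; field_simp
    have hacne' : 1 - a - c ≠ 0 := hacne
    rw [hC1, hC2, hC3, e1, e2, e3]
    field_simp
    ring
  rw [← hLeq]
  -- rewrite the inner sum as a range sum of s
  have hinner : ∀ m : ℕ,
      (∑ i ∈ Finset.Icc 1 m,
          ((U - 1) / U) ^ (m - i) * (1 / U) *
            ((1 - b) * (1 - (1 - a) ^ (m - i)) +
              a * b * ((1 - a) ^ (m - i) - c ^ (m - i)) / (1 - a - c)))
        = ∑ j ∈ Finset.range m, s j := by
    intro m
    have h1 : Finset.Icc 1 m = Finset.Ico 1 (m + 1) := by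
      rw [Nat.Icc_eq_range', Nat.Ico_eq_range']
    rw [h1, Finset.sum_Ico_eq_sum_range]
    simp only [Nat.add_sub_cancel]
    rw [← Finset.sum_range_reflect (fun i => s i) m]
    refine Finset.sum_congr rfl (fun j hj => ?_)
    have hjm : j < m := Finset.mem_range.mp hj
    have : m - (1 + j) = m - 1 - j := by omega
    rw [this]
  -- apply Cesàro
  have hshift : Tendsto (fun k : ℕ => ∑ j ∈ Finset.range (k + 1), s j) atTop
      (nhds (C1 * (1 - r)⁻¹ + C2 * (1 - r * p)⁻¹ + C3 * (1 - r * c)⁻¹)) :=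
    hcomb.comp (tendsto_add_atTop_nat 1)
  have hces := hshift.cesaro
  refine hces.congr (fun n => ?_)
  rw [one_div]
  congr 1
  have h1 : Finset.Icc 1 n = Finset.Ico 1 (n + 1) := by
    rw [Nat.Icc_eq_range', Nat.Ico_eq_range']
  rw [h1, Finset.sum_Ico_eq_sum_range]
  simp only [Nat.add_sub_cancel]
  refine Finset.sum_congr rfl (fun k _ => ?_)
  rw [hinner (1 + k), Nat.add_comm 1 k]
end
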